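/- arXiv:1406.1481 — 4 statements merged into one kernel-verified Lean document; each statement's English description precedes it below -/
import Mathlib

section
/- For 0 < C < 1, the image of the closed disk {z ∈ ℂ : |z| ≤ C} under the map z ↦ log(z - 1), where log is the branch of the logarithm with imaginary part in [0, 2π), is a convex subset of ℂ. -/
open Complex

/-- The branch of the complex logarithm with imaginary part in `[0, 2π)`. -/
noncomputable def log2pi (z : ℂ) : ℂ :=
  if 0 ≤ Complex.arg z then Complex.log z else Complex.log z + 2 * Real.pi * Complex.I

/-!
Writing `z = e^u + 1`, the image is the set of `u` with `Im u ∈ [π/2, 3π/2]` and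
`|e^u + 1|² ≤ C²`. Dividing by `e^{Re u}`, the latter reads
`e^{Re u} + 2 cos (Im u) + (1 - C²) e^{-Re u} ≤ 0`, a sublevel set of a sum of functions that are
convex on that strip: `cos` is convex on `[π/2, 3π/2]` and `1 - C² > 0`.
-/

open scoped Real
open Set

theorem Real.convexOn_cos_Icc : ConvexOn ℝ (Icc (π / 2) (3 * π / 2)) cos := by
  have h := strictConcaveOn_cos_Icc.concaveOn.translate_right (-π)
  have hs : (fun x => -π + x) ⁻¹' Icc (-(π / 2)) (π / 2) = Icc (π / 2) (3 * π / 2) := by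
    ext x; simp only [mem_preimage, mem_Icc]; constructor <;> intro h <;> constructor <;> linarith
  have hf : (cos ∘ fun x => -π + x) = -cos := by
    ext x; simp [neg_add_eq_sub, cos_sub_pi]
  rw [hs, hf] at h
  exact neg_concaveOn_iff.mp h

theorem Complex.convexOn_exp_re_add_cos_im {k : ℝ} (hk : 0 ≤ k) :
    ConvexOn ℝ {u : ℂ | u.im ∈ Icc (π / 2) (3 * π / 2)}
      (fun u => Real.exp u.re + 2 * Real.cos u.im + k * Real.exp (-u.re)) := by
  have hexp_re : ConvexOn ℝ univ (fun u : ℂ => Real.exp u.re) := convexOn_exp.comp_linearMap reLm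
  have hexp_neg_re : ConvexOn ℝ univ (fun u : ℂ => Real.exp (-u.re)) :=
    convexOn_exp.comp_linearMap (-reLm)
  have hcos_im : ConvexOn ℝ {u : ℂ | u.im ∈ Icc (π / 2) (3 * π / 2)} (fun u => Real.cos u.im) :=
    Real.convexOn_cos_Icc.comp_linearMap imLm
  have hdom := hcos_im.1
  exact ((hexp_re.subset (subset_univ _) hdom).add (hcos_im.smul zero_le_two)).add
    ((hexp_neg_re.subset (subset_univ _) hdom).smul hk)

theorem Complex.norm_exp_add_one_sq (u : ℂ) :
    ‖cexp u + 1‖ ^ 2 = Real.exp u.re ^ 2 + 2 * Real.exp u.re * Real.cos u.im + 1 := by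
  rw [Complex.sq_norm, normSq_apply]
  simp only [add_re, add_im, one_re, one_im, exp_re, exp_im]
  linear_combination Real.exp u.re ^ 2 * Real.sin_sq_add_cos_sq u.im

theorem Complex.norm_exp_add_one_le_iff {C : ℝ} (hC : 0 ≤ C) (u : ℂ) :
    ‖cexp u + 1‖ ≤ C ↔
      Real.exp u.re + 2 * Real.cos u.im + (1 - C ^ 2) * Real.exp (-u.re) ≤ 0 := by
  have key : ‖cexp u + 1‖ ^ 2 - C ^ 2 =
      Real.exp u.re * (Real.exp u.re + 2 * Real.cos u.im + (1 - C ^ 2) * Real.exp (-u.re)) := by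
    rw [norm_exp_add_one_sq, Real.exp_neg]
    field_simp
    ring
  rw [← sq_le_sq₀ (norm_nonneg _) hC, ← sub_nonpos, key]
  exact smul_nonpos_iff_nonpos_of_pos_left (Real.exp_pos _)

theorem exp_log2pi {z : ℂ} (hz : z ≠ 0) : cexp (log2pi z) = z := by
  unfold log2pi
  split_ifs
  · exact Complex.exp_log hz
  · rw [exp_add, Complex.exp_log hz, exp_two_pi_mul_I, mul_one]

theorem log2pi_exp {u : ℂ} (h0 : 0 ≤ u.im) (h2π : u.im < 2 * π) : log2pi (cexp u) = u := by
  rcases le_or_gt u.im π with hle | hgt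
  · have hlog : log (cexp u) = u := log_exp (by linarith [Real.pi_pos]) hle
    have harg : 0 ≤ arg (cexp u) := by rw [← log_im, hlog]; exact h0
    rw [log2pi, if_pos harg, hlog]
  · have hv : (u - 2 * π * I).im = u.im - 2 * π := by simp
    have hlog : log (cexp u) = u - 2 * π * I := by
      rw [← exp_periodic.sub_eq u]
      exact log_exp (by rw [hv]; linarith) (by rw [hv]; linarith)
    have harg : ¬0 ≤ arg (cexp u) := by rw [← log_im, hlog, hv]; linarith
    rw [log2pi, if_neg harg, hlog, sub_add_cancel]

theorem im_log2pi_mem_Ioo {z : ℂ} (hz : z.re < 0) : (log2pi z).im ∈ Ioo (π / 2) (3 * π / 2) := by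
  have harg : π / 2 < |arg z| := by
    rw [lt_iff_not_ge, abs_arg_le_pi_div_two_iff]
    exact hz.not_ge
  unfold log2pi
  split_ifs with h
  · rw [abs_of_nonneg h] at harg
    rw [log_im]
    exact ⟨harg, by linarith [arg_le_pi z, Real.pi_pos]⟩
  · rw [abs_of_neg (not_le.mp h)] at harg
    simp only [add_im, log_im, mul_im, ofReal_re, ofReal_im, I_re, I_im, re_ofNat, im_ofNat,
      mul_re]
    constructor <;> linarith [neg_pi_lt_arg z, Real.pi_pos]

theorem image_log2pi_sub_one {s : Set ℂ} (hs : ∀ z ∈ s, z.re < 1) :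
    (fun z => log2pi (z - 1)) '' s = {u | u.im ∈ Icc (π / 2) (3 * π / 2) ∧ cexp u + 1 ∈ s} := by
  ext u
  constructor
  · rintro ⟨z, hz, rfl⟩
    have hre : (z - 1).re < 0 := by simpa using hs z hz
    have hne : z - 1 ≠ 0 := fun h => by simp [h] at hre
    exact ⟨Ioo_subset_Icc_self (im_log2pi_mem_Ioo hre), by rwa [exp_log2pi hne, sub_add_cancel]⟩
  · rintro ⟨him, hu⟩
    refine ⟨cexp u + 1, hu, ?_⟩
    show log2pi (cexp u + 1 - 1) = u
    rw [add_sub_cancel_right,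
      log2pi_exp (by linarith [him.1, Real.pi_pos]) (by linarith [him.2, Real.pi_pos])]

theorem convex_log_image_of_disk (C : ℝ) (hC0 : 0 < C) (hC1 : C < 1) :
    Convex ℝ ((fun z : ℂ => log2pi (z - 1)) '' {z : ℂ | ‖z‖ ≤ C}) := by
  have hdisk : ∀ z ∈ {z : ℂ | ‖z‖ ≤ C}, z.re < 1 := fun z hz =>
    (re_le_norm z).trans_lt (hz.trans_lt hC1)
  rw [image_log2pi_sub_one hdisk]
  convert (convexOn_exp_re_add_cos_im (k := 1 - C ^ 2) (by nlinarith)).convex_le 0 using 1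
  ext u
  simp only [mem_ofPred_eq, norm_exp_add_one_le_iff hC0.le]
end

section
/- Let 0 < C < 1 and set A = 1 - C² > 0. Define ψ(x) implicitly by cos ψ(x) = (e^x + A e^{-x})/2 for x in the range where this right-hand side lies in [cos(π/2), 1], with ψ(x) ∈ [0, π/2). Then ψ is concave on this interval; equivalently, ψ satisfies -ψ'' sin ψ = (1 + (ψ')²) cos ψ, which forces ψ'' ≤ 0. -/
/-! On the interval, `ψ = arccos ∘ f` with `f x = (eˣ + A e⁻ˣ)/2`. Since `A ≥ 0`, `f` is convex, and
its values `cos ψ` lie in `[0, 1]`, where `arccos` is concave and decreasing; a concave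
decreasing function of a convex function is concave. -/

open Real Set

theorem ConcaveOn.comp_convexOn_of_mapsTo {s t : Set ℝ} {f g : ℝ → ℝ}
    (hg : ConcaveOn ℝ t g) (hg' : AntitoneOn g t) (hf : ConvexOn ℝ s f) (hst : MapsTo f s t) :
    ConcaveOn ℝ s (g ∘ f) := by
  refine ⟨hf.1, fun x hx y hy a b ha hb hab => ?_⟩
  calc a • g (f x) + b • g (f y) ≤ g (a • f x + b • f y) := hg.2 (hst hx) (hst hy) ha hb hab
    _ ≤ g (f (a • x + b • y)) :=
        hg' (hst (hf.1 hx hy ha hb hab)) (hg.1 (hst hx) (hst hy) ha hb hab) (hf.2 hx hy ha hb hab)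

theorem antitoneOn_deriv_arccos : AntitoneOn (deriv arccos) (Ioo 0 1) := by
  intro x hx y hy hxy
  rw [deriv_arccos]
  have hy2 : 0 < 1 - y ^ 2 := by nlinarith [hy.1, hy.2]
  have : √(1 - y ^ 2) ≤ √(1 - x ^ 2) := Real.sqrt_le_sqrt (by nlinarith [hx.1])
  simp only [neg_le_neg_iff]
  gcongr

theorem concaveOn_arccos_Icc : ConcaveOn ℝ (Icc 0 1) arccos := by
  refine AntitoneOn.concaveOn_of_deriv (convex_Icc 0 1) continuous_arccos.continuousOn ?_ ?_
  all_goals rw [interior_Icc]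
  · refine differentiableOn_arccos.mono fun x hx => ?_
    simp only [mem_compl_iff, mem_insert_iff, mem_singleton_iff, not_or]
    constructor <;> linarith [hx.1, hx.2]
  · exact antitoneOn_deriv_arccos

theorem concaveOn_of_convexOn_cos {s : Set ℝ} {ψ : ℝ → ℝ} (hcos : ConvexOn ℝ s (cos ∘ ψ))
    (hψ : MapsTo ψ s (Icc 0 (π / 2))) : ConcaveOn ℝ s ψ := by
  refine (concaveOn_arccos_Icc.comp_convexOn_of_mapsTo (antitone_arccos.antitoneOn _) hcos
    fun x hx => ?_).congr fun x hx => ?_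
  · exact ⟨cos_nonneg_of_mem_Icc ⟨by linarith [(hψ hx).1, pi_pos], (hψ hx).2⟩, cos_le_one _⟩
  · exact arccos_cos (hψ hx).1 (by linarith [(hψ hx).2, pi_pos])

theorem convexOn_exp_add_mul_exp_neg {A : ℝ} (hA : 0 ≤ A) :
    ConvexOn ℝ univ (fun x => (exp x + A * exp (-x)) / 2) := by
  have hneg : ConvexOn ℝ univ (fun x => exp (-x)) :=
    convexOn_exp.comp_linearMap (-LinearMap.id)
  simpa [div_eq_mul_inv, mul_comm] using
    (convexOn_exp.add (hneg.smul hA)).smul (by norm_num : (0 : ℝ) ≤ 1 / 2)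

theorem psi_concave (C : ℝ) (hC0 : 0 < C) (hC1 : C < 1) (ψ : ℝ → ℝ)
    (hψ : ∀ x ∈ Set.Icc (Real.log (1 - C)) (Real.log (1 + C)),
      Real.cos (ψ x) = (Real.exp x + (1 - C ^ 2) * Real.exp (-x)) / 2 ∧
      ψ x ∈ Set.Ico 0 (Real.pi / 2)) :
    ConcaveOn ℝ (Set.Icc (Real.log (1 - C)) (Real.log (1 + C))) ψ := by
  have hA : 0 ≤ 1 - C ^ 2 := by nlinarith
  have hcos : ConvexOn ℝ (Icc (log (1 - C)) (log (1 + C))) (cos ∘ ψ) :=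
    ((convexOn_exp_add_mul_exp_neg hA).subset (subset_univ _) (convex_Icc _ _)).congr
      fun x hx => (hψ x hx).1.symm
  exact concaveOn_of_convexOn_cos hcos fun x hx => Ico_subset_Icc_self (hψ x hx).2
end

section
/- Let P = [[a, 0],[b, 1/a]] with a ∈ ℂ \ {0}, b ∈ ℂ, and suppose F(x,y) := A y² + B y + A x² + C x ≥ 0 for all x ∈ ℝ, y ≥ 0, where A = Im(a·conj(b)), B = Re(a/conj(a)), C = Im(a/conj(a)). Then A ≥ 0, C = 0, a is real, B = 1, and consequently F(x,y) ≥ y for all x ∈ ℝ, y ≥ 0. -/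
/-!
Restricting `F` to the axis `x = 0` gives `0 ≤ A y² + B y` on `y ≥ 0`, which forces `0 ≤ A` and
`0 ≤ B`; restricting it to `y = 0` gives `0 ≤ A x² + C x` on all of `ℝ`, a quadratic vanishing at
`0`, which forces `C = 0`. Now `B + C i = a / conj a` has modulus one, so `C = 0` and `0 ≤ B`
leave only `a / conj a = 1`, i.e. `a` is real and `B = 1`. Then `F x y = A (x² + y²) + y ≥ y`.
-/

section QuadraticPositivity

variable {K : Type*} [Field K] [LinearOrder K] [IsStrictOrderedRing K]

theorem nonneg_leading_coeff_of_forall_nonneg_quadratic {a b : K}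
    (h : ∀ y, 0 ≤ y → 0 ≤ a * y ^ 2 + b * y) : 0 ≤ a := by
  by_contra! ha
  -- at this `y` the linear part `a * y + b` is already negative
  set y := (|b| + 1) / -a
  have hy : 0 < y := div_pos (by positivity) (neg_pos.mpr ha)
  have hay : a * y = -(|b| + 1) := by
    simp only [y]; field_simp [ha.ne]
  have := h y hy.le
  nlinarith [le_abs_self b]

theorem nonneg_linear_coeff_of_forall_nonneg_quadratic {a b : K}
    (h : ∀ y, 0 ≤ y → 0 ≤ a * y ^ 2 + b * y) : 0 ≤ b := by
  by_contra! hb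
  -- at this `y` the quadratic part `a * y` is at most `-b / 2`
  set y := -b / (2 * |a| + 1)
  have hden : 0 < 2 * |a| + 1 := by positivity
  have hy : 0 < y := div_pos (neg_pos.mpr hb) hden
  have hy' : y * (2 * |a| + 1) = -b := div_mul_cancel₀ _ hden.ne'
  have := h y hy.le
  nlinarith [le_abs_self a, mul_le_mul_of_nonneg_right (le_abs_self a) hy.le]

theorem linear_coeff_eq_zero_of_forall_nonneg_quadratic {a c : K}
    (h : ∀ x, 0 ≤ a * x ^ 2 + c * x) : c = 0 := by
  -- evaluate at `x = -c t` with `a t < 1`: the value is `c² t (a t - 1) ≥ 0`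
  set t := 1 / (|a| + 1)
  have hden : 0 < |a| + 1 := by positivity
  have ht : 0 < t := by positivity
  have ht' : t * (|a| + 1) = 1 := by simp only [t]; field_simp
  have := h (-c * t)
  have hc : c ^ 2 * t * (1 - a * t) ≤ 0 := by nlinarith
  have hat : 0 < 1 - a * t := by nlinarith [le_abs_self a]
  have : c ^ 2 ≤ 0 := by
    by_contra! hc2
    nlinarith [mul_pos (mul_pos hc2 ht) hat]
  exact pow_eq_zero_iff two_ne_zero |>.mp (le_antisymm this (sq_nonneg c))

end QuadraticPositivity

namespace Complex

open ComplexConjugate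

theorem norm_div_conj_self {a : ℂ} (ha : a ≠ 0) : ‖a / conj a‖ = 1 := by
  rw [norm_div, norm_conj, div_self (norm_ne_zero_iff.mpr ha)]

theorem eq_one_of_norm_eq_one_of_im_eq_zero {u : ℂ} (hu : ‖u‖ = 1) (him : u.im = 0) (hre : 0 ≤ u.re) :
    u = 1 := by
  have hsq : u.re ^ 2 = 1 := by
    have := normSq_eq_norm_sq u
    rw [hu, normSq_apply, him] at this
    nlinarith
  apply Complex.ext
  · simp only [one_re]; nlinarith
  · simpa using him

theorem im_eq_zero_of_div_conj_self_eq_one {a : ℂ} (ha : a ≠ 0) (h : a / conj a = 1) :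
    a.im = 0 := by
  rw [div_eq_one_iff_eq ((map_ne_zero _).mpr ha)] at h
  exact conj_eq_iff_im.mp h.symm

end Complex

theorem quadratic_positivity_structure_general
    (a : ℂ) (ha : a ≠ 0)
    (A B C : ℝ)
    (hB : B = (a / starRingEnd ℂ a).re)
    (hC : C = (a / starRingEnd ℂ a).im)
    (F : ℝ → ℝ → ℝ)
    (hF : ∀ x y : ℝ, F x y = A * y ^ 2 + B * y + A * x ^ 2 + C * x)
    (hpos : ∀ x y : ℝ, 0 ≤ y → 0 ≤ F x y) :
    0 ≤ A ∧ C = 0 ∧ a.im = 0 ∧ B = 1 ∧ ∀ x y : ℝ, 0 ≤ y → y ≤ F x y := by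
  have hy : ∀ y : ℝ, 0 ≤ y → 0 ≤ A * y ^ 2 + B * y := fun y hy => by
    simpa [hF] using hpos 0 y hy
  have hx : ∀ x : ℝ, 0 ≤ A * x ^ 2 + C * x := fun x => by
    simpa [hF] using hpos x 0 le_rfl
  have hA0 := nonneg_leading_coeff_of_forall_nonneg_quadratic hy
  have hC0 := linear_coeff_eq_zero_of_forall_nonneg_quadratic hx
  have hunit : a / starRingEnd ℂ a = 1 :=
    Complex.eq_one_of_norm_eq_one_of_im_eq_zero (Complex.norm_div_conj_self ha) (hC ▸ hC0)
      (hB ▸ nonneg_linear_coeff_of_forall_nonneg_quadratic hy)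
  have hB1 : B = 1 := by simp [hB, hunit]
  refine ⟨hA0, hC0, Complex.im_eq_zero_of_div_conj_self_eq_one ha hunit, hB1, fun x y hy => ?_⟩
  rw [hF, hB1, hC0]
  nlinarith [mul_nonneg hA0 (sq_nonneg x), mul_nonneg hA0 (sq_nonneg y)]

theorem quadratic_positivity_structure
    (a b : ℂ) (ha : a ≠ 0)
    (A B C : ℝ)
    (hA : A = (a * starRingEnd ℂ b).im)
    (hB : B = (a / starRingEnd ℂ a).re)
    (hC : C = (a / starRingEnd ℂ a).im)
    (F : ℝ → ℝ → ℝ)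
    (hF : ∀ x y : ℝ, F x y = A * y ^ 2 + B * y + A * x ^ 2 + C * x)
    (hpos : ∀ x y : ℝ, 0 ≤ y → 0 ≤ F x y) :
    0 ≤ A ∧ C = 0 ∧ a.im = 0 ∧ B = 1 ∧ ∀ x y : ℝ, 0 ≤ y → y ≤ F x y :=
  quadratic_positivity_structure_general a ha A B C hB hC F hF hpos
end

section
/- Let m₊, m₋ be complex numbers with positive imaginary parts, T = [[a,b],[c,d]] ∈ SL(2,ℝ), and define m₋' = (a m₋ + b)/(c m₋ + d) and m₊' = (a m₊ - b)/(-c m₊ + d) (the action of ITI on m₊, where I = diag(1,-1)). Assume all denominators and m₊ + m₋, m₊' + m₋' are nonzero. Then the reflection coefficients satisfy |(conj(m₊') + m₋')/(m₊' + m₋')| = |(conj(m₊) + m₋)/(m₊ + m₋)|. -/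
/-!
Write `T z = (a z + b)/(c z + d)`, so that `m₊' = -T(-m₊)`. For `det T = 1` the cocycle identity
`T z - T w = (z - w)/((c z + d)(c w + d))` gives
`m₊' + m₋' = (m₊ + m₋)/((-c m₊ + d)(c m₋ + d))`, and, since `T` has real entries, the same
identity with `m₊` replaced by `conj m₊` for the numerator `conj m₊' + m₋'`. Both factors
`-c m₊ + d` and `-c conj m₊ + d` are conjugate, hence of equal modulus, so they cancel in `|R|`.
-/

theorem reflected_mobius_add_mobius {K : Type*} [Field K] {a b c d : K}
    (hdet : a * d - b * c = 1) {p q : K} (hp : -c * p + d ≠ 0) (hq : c * q + d ≠ 0) :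
    (a * p - b) / (-c * p + d) + (a * q + b) / (c * q + d) =
      (p + q) / ((-c * p + d) * (c * q + d)) := by
  rw [div_add_div _ _ hp hq]
  congr 1
  linear_combination (p + q) * hdet

theorem Complex.conj_reflected_mobius (a b c d : ℝ) (p : ℂ) :
    starRingEnd ℂ ((a * p - b) / (-c * p + d)) =
      (a * starRingEnd ℂ p - b) / (-c * starRingEnd ℂ p + d) := by
  simp

theorem Complex.conj_affine (c d : ℝ) (p : ℂ) :
    -c * starRingEnd ℂ p + d = starRingEnd ℂ (-c * p + d) := by
  simp

theorem TM_preserves_abs_reflection_general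
    (mp mm : ℂ)
    (a b c d : ℝ) (hdet : a * d - b * c = 1)
    (mp' mm' : ℂ)
    (hmm' : mm' = ((a : ℂ) * mm + b) / ((c : ℂ) * mm + d))
    (hmp' : mp' = ((a : ℂ) * mp - b) / (-(c : ℂ) * mp + d))
    (hden1 : (c : ℂ) * mm + d ≠ 0) (hden2 : -(c : ℂ) * mp + d ≠ 0) :
    ‖(starRingEnd ℂ mp' + mm') / (mp' + mm')‖ =
      ‖(starRingEnd ℂ mp + mm) / (mp + mm)‖ := by
  have hdetℂ : (a : ℂ) * d - b * c = 1 := by exact_mod_cast hdet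
  have hden2_conj : -(c : ℂ) * starRingEnd ℂ mp + d ≠ 0 := by
    rwa [Complex.conj_affine, map_ne_zero]
  have hnum : starRingEnd ℂ mp' + mm' = (starRingEnd ℂ mp + mm) /
      ((-(c : ℂ) * starRingEnd ℂ mp + d) * ((c : ℂ) * mm + d)) := by
    rw [hmp', Complex.conj_reflected_mobius, hmm',
      reflected_mobius_add_mobius hdetℂ hden2_conj hden1]
  have hden : mp' + mm' = (mp + mm) / ((-(c : ℂ) * mp + d) * ((c : ℂ) * mm + d)) := by
    rw [hmp', hmm', reflected_mobius_add_mobius hdetℂ hden2 hden1]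
  rw [hnum, hden, Complex.conj_affine, norm_div, norm_div, norm_div, norm_mul, norm_mul,
    Complex.norm_conj, ← norm_mul,
    div_div_div_cancel_right₀ (by simpa using mul_ne_zero hden2 hden1), norm_div]

theorem TM_preserves_abs_reflection
    (mp mm : ℂ) (hp : 0 < mp.im) (hm : 0 < mm.im)
    (a b c d : ℝ) (hdet : a * d - b * c = 1)
    (mp' mm' : ℂ)
    (hmm' : mm' = ((a : ℂ) * mm + b) / ((c : ℂ) * mm + d))
    (hmp' : mp' = ((a : ℂ) * mp - b) / (-(c : ℂ) * mp + d))
    (hden1 : (c : ℂ) * mm + d ≠ 0) (hden2 : -(c : ℂ) * mp + d ≠ 0)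
    (hsum : mp + mm ≠ 0) (hsum' : mp' + mm' ≠ 0) :
    ‖(starRingEnd ℂ mp' + mm') / (mp' + mm')‖ =
      ‖(starRingEnd ℂ mp + mm) / (mp + mm)‖ :=
  TM_preserves_abs_reflection_general mp mm a b c d hdet mp' mm' hmm' hmp' hden1 hden2
end
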